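/- If $w$ is an infinite $2^+$-power-free binary word, then for every $i \geq 1$, no product of $i$ factors of $w$ has exponent exceeding $2i$; hence $\rt_i(2) = 2i$. -/

import Mathlib

open scoped ENNReal

/-- `u` occurs as a factor of the infinite word `w` (at some position `i`). -/
def FactorOf {α : Type*} (u : List α) (w : ℕ → α) : Prop :=
  ∃ i : ℕ, u = (List.range u.length).map (fun k => w (i + k))

/-- `p` is a period of the finite word `v`. -/
def HasPeriod {α : Type*} (v : List α) (p : ℕ) : Prop :=
  0 < p ∧ p ≤ v.length ∧ ∀ i : ℕ, i + p < v.length → v[i + p]? = v[i]?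

/-- The set of exponents of products of `i` factors of the infinite word `w`. -/
def prodExpSet (i : ℕ) (w : ℕ → Fin 2) : Set ℝ≥0∞ :=
  {e | ∃ l : List (List (Fin 2)), l.length = i ∧ (∀ x ∈ l, FactorOf x w) ∧
    ∃ p : ℕ, HasPeriod l.flatten p ∧ e = (l.flatten.length : ℝ≥0∞) / p}

/-! A product of `i` factors, each of exponent at most `c`, has exponent at most `c i`: a period
`p` of the product is a period of every factor at least `p` long, so every factor has length at
most `c p`. Conversely every binary word contains a square `u u` (four letters with no two equal
neighbours are `a b a b`), and `i` copies of it form a product of exponent exactly `2 i`. -/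

section Period

variable {α : Type*} {u v x : List α} {p : ℕ}

theorem hasPeriod_iff_list_hasPeriod :
    HasPeriod v p ↔ 0 < p ∧ p ≤ v.length ∧ v.HasPeriod p := by
  simp only [HasPeriod, List.hasPeriod_iff_getElem?, eq_comm (a := v[_ + p]?)]
  exact and_congr_right fun _ => and_congr_right fun _ =>
    ⟨fun h i hi => h i (by omega), fun h i hi => h i (by omega)⟩

theorem HasPeriod.of_infix (hv : HasPeriod v p) (hx : x <:+: v) (hp : p ≤ x.length) :
    HasPeriod x p := by
  obtain ⟨hp0, -, hper⟩ := hasPeriod_iff_list_hasPeriod.mp hv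
  exact hasPeriod_iff_list_hasPeriod.mpr ⟨hp0, hp, hper.infix hx⟩

theorem hasPeriod_flatten_replicate (hu : u ≠ []) {n : ℕ} (hn : n ≠ 0) :
    HasPeriod (List.replicate n u).flatten u.length := by
  obtain ⟨n, rfl⟩ := Nat.exists_eq_add_one_of_ne_zero hn
  refine hasPeriod_iff_list_hasPeriod.mpr
    ⟨List.length_pos_iff.mpr hu, by simp [Nat.le_mul_of_pos_left], ?_⟩
  have htake : (List.replicate (n + 1) u).flatten.take u.length = u := by
    simp [List.replicate_succ]
  rw [List.HasPeriod, htake, ← List.flatten_cons, ← List.replicate_succ,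
    List.replicate_succ' (n := n + 1), List.flatten_append]
  exact List.prefix_append _ _

theorem flatten_replicate_append_self (u : List α) (n : ℕ) :
    (List.replicate n (u ++ u)).flatten = (List.replicate (2 * n) u).flatten := by
  induction n with
  | zero => rfl
  | succ n ih => simp [List.replicate_succ, ih, Nat.mul_succ]

theorem length_le_of_infix_of_hasPeriod {c : ℕ} (hc : 0 < c)
    (hx : ∀ q, HasPeriod x q → x.length ≤ c * q) (hxv : x <:+: v) (hv : HasPeriod v p) :
    x.length ≤ c * p := by
  by_cases hp : p ≤ x.length
  · exact hx p (hv.of_infix hxv hp)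
  · nlinarith

theorem length_flatten_le_of_hasPeriod {l : List (List α)} {c : ℕ} (hc : 0 < c)
    (hl : ∀ x ∈ l, ∀ q, HasPeriod x q → x.length ≤ c * q) (hper : HasPeriod l.flatten p) :
    l.flatten.length ≤ l.length * (c * p) := by
  have hbound : ∀ n ∈ l.map List.length, n ≤ c * p := by
    simp only [List.mem_map]
    rintro _ ⟨x, hx, rfl⟩
    exact length_le_of_infix_of_hasPeriod hc (hl x hx) (List.infix_of_mem_flatten hx) hper
  simpa [List.length_flatten] using List.sum_le_card_nsmul _ _ hbound

end Period

theorem exists_ne_nil_factorOf_append_self (w : ℕ → Fin 2) :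
    ∃ u : List (Fin 2), u ≠ [] ∧ FactorOf (u ++ u) w := by
  have key : ∀ a b c d : Fin 2, a = b ∨ b = c ∨ c = d ∨ (a = c ∧ b = d) := by decide
  rcases key (w 0) (w 1) (w 2) (w 3) with h | h | h | ⟨h, h'⟩
  · exact ⟨[w 0], by simp, 0, by simp [List.range_succ, h]⟩
  · exact ⟨[w 1], by simp, 1, by simp [List.range_succ, h]⟩
  · exact ⟨[w 2], by simp, 2, by simp [List.range_succ, h]⟩
  · exact ⟨[w 0, w 1], by simp, 0, by simp [List.range_succ, h, h']⟩

theorem two_mul_mem_prodExpSet (w : ℕ → Fin 2) {i : ℕ} (hi : i ≠ 0) :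
    (2 * i : ℝ≥0∞) ∈ prodExpSet i w := by
  obtain ⟨u, hu, hfac⟩ := exists_ne_nil_factorOf_append_self w
  have hu0 : (u.length : ℝ≥0∞) ≠ 0 := by simpa using hu
  refine ⟨List.replicate i (u ++ u), List.length_replicate, fun x hx => ?_, u.length, ?_, ?_⟩
  · rwa [List.eq_of_mem_replicate hx]
  · rw [flatten_replicate_append_self]
    exact hasPeriod_flatten_replicate hu (by omega)
  · rw [flatten_replicate_append_self, ENNReal.eq_div_iff hu0 (ENNReal.natCast_ne_top _)]
    simp [List.length_flatten, mul_comm]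

theorem overlap_free_prod_exponent (w : ℕ → Fin 2)
    (hfree : ∀ (v : List (Fin 2)) (p : ℕ), FactorOf v w → HasPeriod v p →
      v.length ≤ 2 * p) :
    (∀ i : ℕ, 1 ≤ i → ∀ l : List (List (Fin 2)), l.length = i →
      (∀ x ∈ l, FactorOf x w) → ∀ p : ℕ, HasPeriod l.flatten p →
        l.flatten.length ≤ 2 * i * p) ∧
    (∀ i : ℕ, 1 ≤ i →
      (⨅ w' : ℕ → Fin 2, sSup (prodExpSet i w')) = (2 * i : ℝ≥0∞)) := by
  have hprod : ∀ i : ℕ, ∀ l : List (List (Fin 2)), l.length = i →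
      (∀ x ∈ l, FactorOf x w) → ∀ p : ℕ, HasPeriod l.flatten p →
        l.flatten.length ≤ 2 * i * p := by
    rintro _ l rfl hfac p hper
    have := length_flatten_le_of_hasPeriod two_pos (fun x hx q => hfree x q (hfac x hx)) hper
    linarith
  refine ⟨fun i _ => hprod i, fun i hi => le_antisymm ?_ ?_⟩
  · refine iInf_le_of_le w (sSup_le ?_)
    rintro _ ⟨l, hl, hfac, p, hper, rfl⟩
    exact ENNReal.div_le_of_le_mul (by exact_mod_cast hprod i l hl hfac p hper)
  · exact le_iInf fun w' => le_sSup (two_mul_mem_prodExpSet w' (by omega))
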